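/- Let $Q_\alpha$ and $D$ be real $k\times k$ matrices, and let $\lambda_1,\ldots,\lambda_N \in \mathbb{R}$ and $\psi_1,\ldots,\psi_N : \mathbb{R}^m \to \mathbb{R}$ be twice continuously differentiable with $\Delta\psi_j = -\lambda_j\psi_j$ on an open set $\Omega \subseteq \mathbb{R}^m$. Let $\alpha \in \mathbb{R}^k$, let $c^0 : \mathbb{R} \to \mathbb{R}^k$ be a differentiable solution of $\dot c^0 = Q_\alpha c^0 - f(t)\,c^0$ with $f(t) = (\alpha, c^0(t))$, and for each $j = 1,\ldots,N$ let $c^j : \mathbb{R} \to \mathbb{R}^k$ be a differentiable solution of $\dot c^j = Q_\alpha c^j - f(t)\,c^j - \lambda_j D c^j$. Then the function $u(x,t) = c^0(t) + \sum_{j=1}^N c^j(t)\,\psi_j(x)$ satisfies, for all $x \in \Omega$ and $t$, the distributed Eigen equation $\partial_t u_i(x,t) = (Q_\alpha u(x,t))_i - u_i(x,t)\,f(t) + \sum_{l=1}^k d_{il}\,\Delta_x u_l(x,t)$, $i = 1,\ldots,k$. If moreover $\Omega$ has Lebesgue measure $1$ and $\int_\Omega \psi_j(x)\,dx = 0$ for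 each $j$, then $f(t) = \int_\Omega (\alpha, u(x,t))\,dx$, i.e., $f$ equals the mean integral fitness of $u$. -/

import Mathlib

/-!
Since `Δψⱼ = -λⱼ ψⱼ` on `Ω`, the Laplacian of `u = c⁰ + ∑ⱼ cʲ ψⱼ` is `-∑ⱼ λⱼ cʲ ψⱼ`, so
`D Δu` is exactly the extra term `-λⱼ D cʲ` of the mode equations; the remaining terms
`Qα cʲ - f cʲ` are linear in the modes with the common factor `f(t)`, so the mode equations
add up to the distributed equation. When `Ω` has measure one and every `ψⱼ` has mean zero,
integrating `(α, u)` over `Ω` kills all modes but `c⁰`, leaving `(α, c⁰) = f`.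
-/

open Matrix MeasureTheory

/-- The Laplace operator `Δ f (x) = ∑ i ∂²f/∂xᵢ² (x)` on functions of `m` real
variables: the sum of the second derivatives of the one-variable coordinate slices. -/
noncomputable def laplacian {m : ℕ} (f : (Fin m → ℝ) → ℝ) (x : Fin m → ℝ) : ℝ :=
  ∑ i, iteratedDeriv 2 (fun s => f (Function.update x i s)) (x i)

section Laplacian

variable {m : ℕ}

theorem laplacian_const_add (a : ℝ) (g : (Fin m → ℝ) → ℝ) (x : Fin m → ℝ) :
    laplacian (fun y => a + g y) x = laplacian g x :=
  Finset.sum_congr rfl fun _ _ => iteratedDeriv_const_add two_pos a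

theorem laplacian_const_mul (a : ℝ) (g : (Fin m → ℝ) → ℝ) (x : Fin m → ℝ) :
    laplacian (fun y => a * g y) x = a * laplacian g x := by
  simp only [laplacian, iteratedDeriv_const_mul_field, Finset.mul_sum]

theorem laplacian_fun_sum {ι : Type*} {s : Finset ι} {g : ι → (Fin m → ℝ) → ℝ}
    {x : Fin m → ℝ} (hg : ∀ j ∈ s, ContDiffAt ℝ 2 (g j) x) :
    laplacian (fun y => ∑ j ∈ s, g j y) x = ∑ j ∈ s, laplacian (g j) x := by
  unfold laplacian
  rw [Finset.sum_comm]
  refine Finset.sum_congr rfl fun i _ => iteratedDeriv_fun_sum fun j hj => ?_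
  have hslice : ContDiffAt ℝ 2 (Function.update x i) (x i) :=
    (contDiff_update 2 x i).contDiffAt
  exact (Function.update_eq_self i x ▸ hg j hj).comp (x i) hslice

theorem laplacian_const_add_sum_mul {ι : Type*} {s : Finset ι} {g : ι → (Fin m → ℝ) → ℝ}
    {x : Fin m → ℝ} (hg : ∀ j ∈ s, ContDiffAt ℝ 2 (g j) x) (a : ℝ) (b : ι → ℝ) :
    laplacian (fun y => a + ∑ j ∈ s, b j * g j y) x = ∑ j ∈ s, b j * laplacian (g j) x := by
  rw [laplacian_const_add, laplacian_fun_sum fun j hj => contDiffAt_const.mul (hg j hj)]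
  simp only [laplacian_const_mul]

end Laplacian

theorem mulVec_sum_mul_apply {R n ι : Type*} [CommSemiring R] [Fintype n] [Fintype ι]
    (M : Matrix n n R) (w : ι → n → R) (p : ι → R) (i : n) :
    (M *ᵥ fun l => ∑ j, w j l * p j) i = ∑ j, (M *ᵥ w j) i * p j := by
  simp only [mulVec, dotProduct, Finset.mul_sum, Finset.sum_mul]
  rw [Finset.sum_comm]
  simp only [mul_assoc]

theorem hasDerivAt_mode_expansion {n ι : Type*} [Fintype n] [Fintype ι]
    (Q D : Matrix n n ℝ) (lam p : ι → ℝ) (f : ℝ → ℝ) {c0 : ℝ → n → ℝ} {c : ι → ℝ → n → ℝ}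
    {t : ℝ} {i : n}
    (hc0 : HasDerivAt (fun s => c0 s i) ((Q *ᵥ c0 t) i - f t * c0 t i) t)
    (hc : ∀ j, HasDerivAt (fun s => c j s i)
      ((Q *ᵥ c j t) i - f t * c j t i - lam j * (D *ᵥ c j t) i) t) :
    HasDerivAt (fun s => c0 s i + ∑ j, c j s i * p j)
      ((Q *ᵥ fun l => c0 t l + ∑ j, c j t l * p j) i - (c0 t i + ∑ j, c j t i * p j) * f t
        + ∑ l, D i l * ∑ j, c j t l * (-lam j * p j)) t := by
  refine (hc0.fun_add (HasDerivAt.fun_sum fun j _ => (hc j).mul_const (p j))).congr_deriv ?_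
  have hQ : (Q *ᵥ fun l => c0 t l + ∑ j, c j t l * p j) i
      = (Q *ᵥ c0 t) i + ∑ j, (Q *ᵥ c j t) i * p j := by
    rw [← mulVec_sum_mul_apply, ← Pi.add_apply, ← mulVec_add]
    rfl
  have hD : ∑ l, D i l * ∑ j, c j t l * (-lam j * p j) = ∑ j, (D *ᵥ c j t) i * (-lam j * p j) :=
    mulVec_sum_mul_apply D (fun j => c j t) _ i
  rw [hQ, hD, add_mul, Finset.sum_mul, add_sub_add_comm, add_assoc, ← Finset.sum_sub_distrib,
    ← Finset.sum_add_distrib]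
  congr 1
  · ring
  · exact Finset.sum_congr rfl fun j _ => by ring

theorem integral_dotProduct_mode_expansion {X n ι : Type*} [MeasurableSpace X] [Fintype n]
    [Fintype ι] {μ : Measure X} [IsProbabilityMeasure μ] {φ : ι → X → ℝ}
    (hφ : ∀ j, Integrable (φ j) μ) (hφ0 : ∀ j, ∫ x, φ j x ∂μ = 0)
    (α c0 : n → ℝ) (c : ι → n → ℝ) :
    ∫ x, ∑ i, α i * (c0 i + ∑ j, c j i * φ j x) ∂μ = ∑ i, α i * c0 i := by
  have hpointwise : ∀ x, ∑ i, α i * (c0 i + ∑ j, c j i * φ j x)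
      = ∑ i, α i * c0 i + ∑ j, (∑ i, α i * c j i) * φ j x := by
    intro x
    simp only [mul_add, Finset.sum_add_distrib, Finset.mul_sum, Finset.sum_mul, mul_assoc]
    rw [Finset.sum_comm]
  have hmode : ∀ j, Integrable (fun x => (∑ i, α i * c j i) * φ j x) μ :=
    fun j => (hφ j).const_mul _
  simp only [hpointwise]
  rw [integral_add (integrable_const _) (integrable_finsetSum _ fun j _ => hmode j),
    integral_finsetSum _ fun j _ => hmode j]
  simp [integral_const_mul, hφ0]

theorem mode_expansion_solves_distributed_eigen_general
    (k m N : ℕ) (Qα D : Matrix (Fin k) (Fin k) ℝ)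
    (Ω : Set (Fin m → ℝ))
    (lam : Fin N → ℝ) (ψ : Fin N → (Fin m → ℝ) → ℝ)
    (hψC : ∀ j, ContDiff ℝ 2 (ψ j))
    (hψ : ∀ j, ∀ x ∈ Ω, laplacian (ψ j) x = -lam j * ψ j x)
    (α : Fin k → ℝ) (c0 : ℝ → Fin k → ℝ) (c : Fin N → ℝ → Fin k → ℝ)
    (f : ℝ → ℝ) (hf : ∀ t : ℝ, f t = ∑ i, α i * c0 t i)
    (hc0 : ∀ (t : ℝ) (i : Fin k),
      HasDerivAt (fun s => c0 s i) ((Qα.mulVec (c0 t)) i - f t * c0 t i) t)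
    (hc : ∀ (j : Fin N) (t : ℝ) (i : Fin k),
      HasDerivAt (fun s => c j s i)
        ((Qα.mulVec (c j t)) i - f t * c j t i - lam j * (D.mulVec (c j t)) i) t) :
    (∀ x ∈ Ω, ∀ (t : ℝ) (i : Fin k),
      HasDerivAt (fun s => c0 s i + ∑ j, c j s i * ψ j x)
        ((Qα.mulVec (fun l => c0 t l + ∑ j, c j t l * ψ j x)) i -
          (c0 t i + ∑ j, c j t i * ψ j x) * f t +
          ∑ l, D i l * laplacian (fun y => c0 t l + ∑ j, c j t l * ψ j y) x) t) ∧
    ((volume Ω = 1 ∧ ∀ j, IntegrableOn (ψ j) Ω ∧ (∫ x in Ω, ψ j x) = 0) →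
      ∀ t : ℝ, f t = ∫ x in Ω, ∑ i, α i * (c0 t i + ∑ j, c j t i * ψ j x)) := by
  refine ⟨fun x hx t i => ?_, fun ⟨hvol, hψint⟩ t => ?_⟩
  · have hlap : ∀ l, laplacian (fun y => c0 t l + ∑ j, c j t l * ψ j y) x
        = ∑ j, c j t l * (-lam j * ψ j x) := fun l => by
      rw [laplacian_const_add_sum_mul fun j _ => (hψC j).contDiffAt]
      simp only [hψ _ x hx]
    simp only [hlap]
    exact hasDerivAt_mode_expansion Qα D lam (fun j => ψ j x) f (hc0 t i) fun j => hc j t i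
  · have : IsProbabilityMeasure (volume.restrict Ω) :=
      ⟨by rw [Measure.restrict_apply_univ, hvol]⟩
    rw [integral_dotProduct_mode_expansion (fun j => (hψint j).1) (fun j => (hψint j).2), hf]

/-- If `c⁰` solves the local Eigen mode equation
`ċ⁰ = Qα c⁰ - f(t) c⁰`, `f(t) = (α, c⁰(t))`, and each `cʲ` solves the mode equation
`ċʲ = Qα cʲ - f(t) cʲ - λⱼ D cʲ`, with `Δψⱼ = -λⱼ ψⱼ` on an open set `Ω`, then
`u(x,t) = c⁰(t) + ∑ⱼ cʲ(t) ψⱼ(x)` solves the distributed Eigen equation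
`∂ₜ u = Qα u - u f(t) + D Δₓ u` on `Ω`; and if moreover `Ω` has Lebesgue measure `1`
and each `ψⱼ` integrates to `0` over `Ω`, then `f` equals the mean integral fitness
`∫_Ω (α, u(x,t)) dx`. -/
theorem mode_expansion_solves_distributed_eigen
    (k m N : ℕ) (Qα D : Matrix (Fin k) (Fin k) ℝ)
    (Ω : Set (Fin m → ℝ)) (hΩopen : IsOpen Ω) (hΩmeas : MeasurableSet Ω)
    (lam : Fin N → ℝ) (ψ : Fin N → (Fin m → ℝ) → ℝ)
    (hψC : ∀ j, ContDiff ℝ 2 (ψ j))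
    (hψ : ∀ j, ∀ x ∈ Ω, laplacian (ψ j) x = -lam j * ψ j x)
    (α : Fin k → ℝ) (c0 : ℝ → Fin k → ℝ) (c : Fin N → ℝ → Fin k → ℝ)
    (f : ℝ → ℝ) (hf : ∀ t : ℝ, f t = ∑ i, α i * c0 t i)
    (hc0 : ∀ (t : ℝ) (i : Fin k),
      HasDerivAt (fun s => c0 s i) ((Qα.mulVec (c0 t)) i - f t * c0 t i) t)
    (hc : ∀ (j : Fin N) (t : ℝ) (i : Fin k),
      HasDerivAt (fun s => c j s i)
        ((Qα.mulVec (c j t)) i - f t * c j t i - lam j * (D.mulVec (c j t)) i) t) :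
    (∀ x ∈ Ω, ∀ (t : ℝ) (i : Fin k),
      HasDerivAt (fun s => c0 s i + ∑ j, c j s i * ψ j x)
        ((Qα.mulVec (fun l => c0 t l + ∑ j, c j t l * ψ j x)) i -
          (c0 t i + ∑ j, c j t i * ψ j x) * f t +
          ∑ l, D i l * laplacian (fun y => c0 t l + ∑ j, c j t l * ψ j y) x) t) ∧
    ((volume Ω = 1 ∧ ∀ j, IntegrableOn (ψ j) Ω ∧ (∫ x in Ω, ψ j x) = 0) →
      ∀ t : ℝ, f t = ∫ x in Ω, ∑ i, α i * (c0 t i + ∑ j, c j t i * ψ j x)) :=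
  mode_expansion_solves_distributed_eigen_general k m N Qα D Ω lam ψ hψC hψ α c0 c f hf hc0 hc
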